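/- arXiv:2308.09261 — 2 statements merged into one kernel-verified Lean document; each statement's English description precedes it below -/
import Mathlib

section
/- Let B and C be bounded linear operators on H admitting A-adjoints B♯ and C♯. Then for every nonzero complex number α, (w_{A,e}(B,C))² ≤ min{ (w_A(B−C))², (w_A(B+C))² } + ( max{1, |1 − α|}·‖C♯C + BB♯‖_A + 2·w_A(BC) ) / |α|. -/
noncomputable section

open scoped ComplexInnerProductSpace

variable {H : Type*} [NormedAddCommGroup H] [InnerProductSpace ℂ H] [CompleteSpace H]

/-- The semi-inner product induced by a positive operator `A`:
`⟨x,y⟩_A = ⟨Ax,y⟩` (linear in the first argument, following the paper's convention). -/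
def innerA (A : H →L[ℂ] H) (x y : H) : ℂ := ⟪y, A x⟫

/-- The seminorm induced by `A`: `‖x‖_A = ⟨Ax,x⟩^{1/2}`. -/
def normA (A : H →L[ℂ] H) (x : H) : ℝ := Real.sqrt (innerA A x x).re

/-- The `A`-numerical radius `w_A(T) = sup { |⟨Tx,x⟩_A| : ‖x‖_A = 1 }`. -/
def wA (A T : H →L[ℂ] H) : ℝ :=
  sSup {r : ℝ | ∃ x : H, normA A x = 1 ∧ r = ‖innerA A (T x) x‖}

/-- The `A`-Crawford number `c_A(T) = inf { |⟨Tx,x⟩_A| : ‖x‖_A = 1 }`. -/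
def cA (A T : H →L[ℂ] H) : ℝ :=
  sInf {r : ℝ | ∃ x : H, normA A x = 1 ∧ r = ‖innerA A (T x) x‖}

/-- The `A`-operator seminorm `‖T‖_A = sup { ‖Tx‖_A : ‖x‖_A = 1 }`. -/
def opNormA (A T : H →L[ℂ] H) : ℝ :=
  sSup {r : ℝ | ∃ x : H, normA A x = 1 ∧ r = normA A (T x)}

/-- The `A`-Euclidean operator radius of the pair `(B, C)`. -/
def wAe (A B C : H →L[ℂ] H) : ℝ :=
  sSup {r : ℝ | ∃ x : H, normA A x = 1 ∧
    r = Real.sqrt ((‖innerA A (B x) x‖)^2 + (‖innerA A (C x) x‖)^2)}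

/-- The `A`-Euclidean operator seminorm of the pair `(B, C)`. -/
def normAe (A B C : H →L[ℂ] H) : ℝ :=
  sSup {r : ℝ | ∃ x : H, normA A x = 1 ∧
    r = Real.sqrt ((normA A (B x))^2 + (normA A (C x))^2)}

/-- `Re_A(T) = (T + T♯)/2`, where `Ts` is an `A`-adjoint of `T`. -/
def ReA (T Ts : H →L[ℂ] H) : H →L[ℂ] H := (2 : ℂ)⁻¹ • (T + Ts)

/-- `Im_A(T) = (T - T♯)/(2i)`, where `Ts` is an `A`-adjoint of `T`. -/
def ImA (T Ts : H →L[ℂ] H) : H →L[ℂ] H := (2 * Complex.I)⁻¹ • (T - Ts)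

/-! Fix `x` with `‖x‖_A = 1` and put `β = ⟨Bx, x⟩_A`, `γ = ⟨Cx, x⟩_A`. Then
`|β|² + |γ|² = (|β| - |γ|)² + 2|β||γ|`, and `(|β| - |γ|)² ≤ |β ∓ γ|² ≤ w_A(B ∓ C)²`.
For the cross term factor `A = S*S`, so that `⟨u, v⟩_A = ⟨Sv, Su⟩`, and apply the Buzano-type
inequality `|α| |⟨U, p⟩| |⟨p, V⟩| ≤ |⟨U, V⟩| + max(1, |1 - α|) ‖U‖ ‖V‖` (for `‖p‖ = 1`) to
`p = Sx`, `U = SB♯x`, `V = SCx`: here `⟨U, V⟩ = ⟨BCx, x⟩_A` and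
`2‖U‖‖V‖ ≤ ‖U‖² + ‖V‖² = Re ⟨(C♯C + BB♯)x, x⟩_A`.
All suprema involved are finite (and not junk values) because an operator with an `A`-adjoint is
`A`-bounded; for `A`-selfadjoint `M` this comes from iterating `‖Mx‖_A² ≤ ‖M²x‖_A ‖x‖_A`. -/

theorem le_of_forall_pow_two_pow_le_mul_pow {a b c : ℝ} (hb : 0 ≤ b)
    (h : ∀ n : ℕ, a ^ 2 ^ n ≤ c * b ^ 2 ^ n) : a ≤ b := by
  by_contra! hba
  rcases hb.eq_or_lt with rfl | hb
  · have h0 := h 0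
    norm_num at h0
    linarith
  have hr : 1 < a / b := (one_lt_div hb).mpr hba
  obtain ⟨n, hn⟩ := pow_unbounded_of_one_lt c hr
  have hc : (a / b) ^ 2 ^ n ≤ c := by
    rw [div_pow, div_le_iff₀ (by positivity)]
    exact h n
  exact (hn.trans_le (pow_le_pow_right₀ hr.le Nat.lt_two_pow_self.le)).not_ge hc

theorem sq_norm_sub_norm_le_min {G : Type*} [SeminormedAddCommGroup G] (u v : G) :
    (‖u‖ - ‖v‖) ^ 2 ≤ min (‖u - v‖ ^ 2) (‖u + v‖ ^ 2) := by
  have hsub := abs_norm_sub_norm_le u v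
  have hadd := abs_norm_sub_norm_le u (-v)
  rw [norm_neg, sub_neg_eq_add] at hadd
  exact le_min (sq_le_sq' (abs_le.mp hsub).1 (abs_le.mp hsub).2)
    (sq_le_sq' (abs_le.mp hadd).1 (abs_le.mp hadd).2)

section Buzano

variable {E : Type*} [NormedAddCommGroup E] [InnerProductSpace ℂ E]

theorem norm_mul_inner_smul_sub_le {p : E} (hp : ‖p‖ = 1) (α : ℂ) (U : E) :
    ‖(α * ⟪p, U⟫) • p - U‖ ≤ max 1 ‖1 - α‖ * ‖U‖ := by
  set t := ⟪p, U⟫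
  set m := max 1 ‖1 - α‖
  have hpp : ⟪p, p⟫ = 1 := by rw [inner_self_eq_norm_sq_to_K, hp]; norm_num
  -- `(α t) p - U = (α - 1) t p + (t p - U)`, and `t p - U` is orthogonal to `p`.
  have pythagoras (c : ℂ) : ‖c • p + (t • p - U)‖ ^ 2 = ‖c‖ ^ 2 + ‖t • p - U‖ ^ 2 := by
    have horth : ⟪c • p, t • p - U⟫ = 0 := by
      rw [inner_smul_left, inner_sub_right, inner_smul_right, hpp, mul_one, sub_self, mul_zero]
    rw [sq, sq, sq, norm_add_sq_eq_norm_sq_add_norm_sq_of_inner_eq_zero _ _ horth, norm_smul, hp,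
      mul_one]
  have hU : ‖U‖ ^ 2 = ‖t‖ ^ 2 + ‖t • p - U‖ ^ 2 := by
    rw [← norm_neg U, ← norm_neg t, ← pythagoras]
    congr 2
    rw [neg_smul]
    abel
  have hq : ‖(α * t) • p - U‖ ^ 2 = ‖1 - α‖ ^ 2 * ‖t‖ ^ 2 + ‖t • p - U‖ ^ 2 := by
    rw [← norm_neg (1 - α), ← mul_pow, ← norm_mul, ← pythagoras]
    congr 2
    rw [neg_sub, sub_mul, one_mul, sub_smul]
    abel
  have hm1 : 1 ≤ m ^ 2 := one_le_pow₀ (le_max_left _ _)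
  have hmα : ‖1 - α‖ ^ 2 ≤ m ^ 2 := by gcongr; exact le_max_right _ _
  rw [← pow_le_pow_iff_left₀ (norm_nonneg _) (by positivity) two_ne_zero]
  calc ‖(α * t) • p - U‖ ^ 2 = ‖1 - α‖ ^ 2 * ‖t‖ ^ 2 + ‖t • p - U‖ ^ 2 := hq
    _ ≤ m ^ 2 * ‖t‖ ^ 2 + m ^ 2 * ‖t • p - U‖ ^ 2 := by
      gcongr
      exact le_mul_of_one_le_left (sq_nonneg _) hm1
    _ = (m * ‖U‖) ^ 2 := by rw [mul_pow, hU]; ring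

theorem norm_mul_norm_inner_mul_norm_inner_le {p : E} (hp : ‖p‖ = 1) (α : ℂ) (U V : E) :
    ‖α‖ * (‖⟪U, p⟫‖ * ‖⟪p, V⟫‖) ≤ ‖⟪U, V⟫‖ + max 1 ‖1 - α‖ * (‖U‖ * ‖V‖) := by
  set q := (α * ⟪p, U⟫) • p - U
  have hsplit : ⟪(α * ⟪p, U⟫) • p, V⟫ = ⟪U, V⟫ + ⟪q, V⟫ := by rw [inner_sub_left]; ring
  calc ‖α‖ * (‖⟪U, p⟫‖ * ‖⟪p, V⟫‖) = ‖⟪(α * ⟪p, U⟫) • p, V⟫‖ := by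
        rw [inner_smul_left, norm_mul, RCLike.norm_conj, norm_mul, norm_inner_symm, mul_assoc]
    _ ≤ ‖⟪U, V⟫‖ + ‖q‖ * ‖V‖ := by
        rw [hsplit]
        exact (norm_add_le _ _).trans (by gcongr; exact norm_inner_le_norm _ _)
    _ ≤ ‖⟪U, V⟫‖ + max 1 ‖1 - α‖ * ‖U‖ * ‖V‖ := by
        gcongr
        exact norm_mul_inner_smul_sub_le hp α U
    _ = ‖⟪U, V⟫‖ + max 1 ‖1 - α‖ * (‖U‖ * ‖V‖) := by ring

end Buzano

section SemiInner

variable {E : Type*} [NormedAddCommGroup E] [InnerProductSpace ℂ E]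

theorem innerA_add_left (A : E →L[ℂ] E) (x y z : E) :
    innerA A (x + y) z = innerA A x z + innerA A y z := by
  simp only [innerA, map_add, inner_add_right]

theorem innerA_sub_left (A : E →L[ℂ] E) (x y z : E) :
    innerA A (x - y) z = innerA A x z - innerA A y z := by
  simp only [innerA, map_sub, inner_sub_right]

theorem re_innerA_self {A : E →L[ℂ] E} (hA : A.IsPositive) (x : E) :
    (innerA A x x).re = normA A x ^ 2 :=
  (Real.sq_sqrt (hA.re_inner_nonneg_right x)).symm

theorem wA_nonneg (A T : E →L[ℂ] E) : 0 ≤ wA A T :=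
  Real.sSup_nonneg (by rintro r ⟨x, -, rfl⟩; exact norm_nonneg _)

theorem opNormA_nonneg (A T : E →L[ℂ] E) : 0 ≤ opNormA A T :=
  Real.sSup_nonneg (by rintro r ⟨x, -, rfl⟩; exact Real.sqrt_nonneg _)

theorem wAe_sq_le {A B C : E →L[ℂ] E} {c : ℝ} (hc : 0 ≤ c)
    (h : ∀ x, normA A x = 1 → ‖innerA A (B x) x‖ ^ 2 + ‖innerA A (C x) x‖ ^ 2 ≤ c) :
    wAe A B C ^ 2 ≤ c := by
  have hle : wAe A B C ≤ √c :=
    Real.sSup_le (by rintro r ⟨x, hx, rfl⟩; exact Real.sqrt_le_sqrt (h x hx)) (Real.sqrt_nonneg c)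
  have h0 : 0 ≤ wAe A B C := Real.sSup_nonneg (by rintro r ⟨x, -, rfl⟩; exact Real.sqrt_nonneg _)
  calc wAe A B C ^ 2 ≤ √c ^ 2 := by gcongr
    _ = c := Real.sq_sqrt hc

end SemiInner

def IsAAdjoint (A T Ts : H →L[ℂ] H) : Prop := A * Ts = star T * A

namespace IsAAdjoint

variable {A T Ts R Rs M : H →L[ℂ] H}

theorem symm (hA : IsSelfAdjoint A) (h : IsAAdjoint A T Ts) : IsAAdjoint A Ts T := by
  have h' := congrArg star h
  rwa [star_mul, star_mul, star_star, hA.star_eq, eq_comm] at h'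

theorem add (hT : IsAAdjoint A T Ts) (hR : IsAAdjoint A R Rs) :
    IsAAdjoint A (T + R) (Ts + Rs) := by
  rw [IsAAdjoint, mul_add, hT, hR, star_add, add_mul]

theorem sub (hT : IsAAdjoint A T Ts) (hR : IsAAdjoint A R Rs) :
    IsAAdjoint A (T - R) (Ts - Rs) := by
  rw [IsAAdjoint, mul_sub, hT, hR, star_sub, sub_mul]

theorem mul (hT : IsAAdjoint A T Ts) (hR : IsAAdjoint A R Rs) :
    IsAAdjoint A (T * R) (Rs * Ts) := by
  rw [IsAAdjoint, ← mul_assoc, hR, mul_assoc, hT, ← mul_assoc, star_mul]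

theorem pow (hM : IsAAdjoint A M M) (n : ℕ) : IsAAdjoint A (M ^ n) (M ^ n) := by
  induction n with
  | zero => simp [IsAAdjoint]
  | succ n ih => simpa only [← pow_succ, ← pow_succ'] using ih.mul hM

theorem innerA_apply_left (hA : IsSelfAdjoint A) (h : IsAAdjoint A T Ts) (x y : H) :
    innerA A (T x) y = innerA A x (Ts y) := by
  rw [innerA, innerA, ← mul_apply_eq_comp, h.symm hA, mul_apply_eq_comp,
    ContinuousLinearMap.star_eq_adjoint, ContinuousLinearMap.adjoint_inner_right]

end IsAAdjoint

section Factorization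

variable {A S T Ts M : H →L[ℂ] H}

theorem innerA_eq_inner (hAS : A = star S * S) (x y : H) : innerA A x y = ⟪S y, S x⟫ := by
  rw [innerA, hAS, mul_apply_eq_comp, ContinuousLinearMap.star_eq_adjoint,
    ContinuousLinearMap.adjoint_inner_right]

theorem normA_eq_norm (hAS : A = star S * S) (x : H) : normA A x = ‖S x‖ := by
  rw [normA, innerA_eq_inner hAS, inner_self_eq_norm_sq_to_K]
  norm_cast
  exact Real.sqrt_sq (norm_nonneg _)

theorem norm_apply_sq_le (hAS : A = star S * S) (hT : IsAAdjoint A T Ts) (y : H) :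
    ‖S (T y)‖ ^ 2 ≤ ‖S (Ts (T y))‖ * ‖S y‖ := by
  have hA : IsSelfAdjoint A := hAS ▸ IsSelfAdjoint.star_mul_self S
  calc ‖S (T y)‖ ^ 2 = (innerA A (T y) (T y)).re := by
        rw [innerA_eq_inner hAS, inner_self_eq_norm_sq_to_K]; norm_cast
    _ = (innerA A y (Ts (T y))).re := by rw [hT.innerA_apply_left hA]
    _ ≤ ‖innerA A y (Ts (T y))‖ := Complex.re_le_norm _
    _ ≤ ‖S (Ts (T y))‖ * ‖S y‖ := by rw [innerA_eq_inner hAS]; exact norm_inner_le_norm _ _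

theorem norm_apply_pow_two_pow_le (hAS : A = star S * S) (hM : IsAAdjoint A M M) (n : ℕ) (y : H) :
    ‖S (M y)‖ ^ 2 ^ n ≤ ‖S ((M ^ 2 ^ n) y)‖ * ‖S y‖ ^ (2 ^ n - 1) := by
  induction n with
  | zero => simp
  | succ n ih =>
    have hsq : (M ^ 2 ^ n) ((M ^ 2 ^ n) y) = (M ^ 2 ^ (n + 1)) y := by
      rw [pow_succ, pow_mul, sq, mul_apply_eq_comp]
    have hexp : (2 ^ n - 1) * 2 + 1 = 2 ^ (n + 1) - 1 := by
      have := Nat.one_le_two_pow (n := n); rw [pow_succ]; omega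
    calc ‖S (M y)‖ ^ 2 ^ (n + 1) = (‖S (M y)‖ ^ 2 ^ n) ^ 2 := by rw [pow_succ, pow_mul]
      _ ≤ (‖S ((M ^ 2 ^ n) y)‖ * ‖S y‖ ^ (2 ^ n - 1)) ^ 2 := by gcongr
      _ = ‖S ((M ^ 2 ^ n) y)‖ ^ 2 * ‖S y‖ ^ ((2 ^ n - 1) * 2) := by ring
      _ ≤ ‖S ((M ^ 2 ^ (n + 1)) y)‖ * ‖S y‖ * ‖S y‖ ^ ((2 ^ n - 1) * 2) := by
        gcongr
        simpa only [hsq] using norm_apply_sq_le hAS (hM.pow (2 ^ n)) y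
      _ = ‖S ((M ^ 2 ^ (n + 1)) y)‖ * ‖S y‖ ^ (2 ^ (n + 1) - 1) := by rw [← hexp]; ring

theorem norm_apply_le_of_isAAdjoint_self (hAS : A = star S * S) (hM : IsAAdjoint A M M) {x : H}
    (hx : ‖S x‖ = 1) : ‖S (M x)‖ ≤ ‖M‖ := by
  refine le_of_forall_pow_two_pow_le_mul_pow (c := ‖S‖ * ‖x‖) (norm_nonneg _) fun n => ?_
  calc ‖S (M x)‖ ^ 2 ^ n ≤ ‖S ((M ^ 2 ^ n) x)‖ := by
        simpa [hx] using norm_apply_pow_two_pow_le hAS hM n x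
    _ ≤ ‖S‖ * (‖M ^ 2 ^ n‖ * ‖x‖) := S.le_opNorm_of_le ((M ^ 2 ^ n).le_opNorm x)
    _ ≤ ‖S‖ * (‖M‖ ^ 2 ^ n * ‖x‖) := by gcongr; exact norm_pow_le' M (by positivity)
    _ = ‖S‖ * ‖x‖ * ‖M‖ ^ 2 ^ n := by ring

theorem norm_apply_sq_le_norm_mul (hAS : A = star S * S) (hT : IsAAdjoint A T Ts) {x : H}
    (hx : ‖S x‖ = 1) : ‖S (T x)‖ ^ 2 ≤ ‖Ts * T‖ := by
  have hA : IsSelfAdjoint A := hAS ▸ IsSelfAdjoint.star_mul_self S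
  calc ‖S (T x)‖ ^ 2 ≤ ‖S ((Ts * T) x)‖ := by simpa [hx] using norm_apply_sq_le hAS hT x
    _ ≤ ‖Ts * T‖ := norm_apply_le_of_isAAdjoint_self hAS ((hT.symm hA).mul hT) hx

end Factorization

theorem ContinuousLinearMap.IsPositive.exists_eq_star_mul_self {A : H →L[ℂ] H}
    (hA : A.IsPositive) : ∃ S, A = star S * S :=
  CStarAlgebra.nonneg_iff_eq_star_mul_self.mp ((ContinuousLinearMap.nonneg_iff_isPositive A).mpr hA)

section Positive

variable {A B C Bs Cs T Ts : H →L[ℂ] H}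

theorem norm_innerA_le (hA : A.IsPositive) (x y : H) :
    ‖innerA A x y‖ ≤ normA A x * normA A y := by
  obtain ⟨S, hAS⟩ := hA.exists_eq_star_mul_self
  rw [innerA_eq_inner hAS, normA_eq_norm hAS, normA_eq_norm hAS, mul_comm]
  exact norm_inner_le_norm _ _

theorem normA_apply_le_sqrt (hA : A.IsPositive) (hT : IsAAdjoint A T Ts) {x : H}
    (hx : normA A x = 1) : normA A (T x) ≤ √‖Ts * T‖ := by
  obtain ⟨S, hAS⟩ := hA.exists_eq_star_mul_self
  rw [normA_eq_norm hAS] at hx ⊢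
  exact Real.le_sqrt_of_sq_le (norm_apply_sq_le_norm_mul hAS hT hx)

theorem normA_apply_le_opNormA (hA : A.IsPositive) (hT : IsAAdjoint A T Ts) {x : H}
    (hx : normA A x = 1) : normA A (T x) ≤ opNormA A T :=
  le_csSup ⟨√‖Ts * T‖, by rintro r ⟨y, hy, rfl⟩; exact normA_apply_le_sqrt hA hT hy⟩ ⟨x, hx, rfl⟩

theorem norm_innerA_apply_le_wA (hA : A.IsPositive) (hT : IsAAdjoint A T Ts) {x : H}
    (hx : normA A x = 1) : ‖innerA A (T x) x‖ ≤ wA A T := by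
  refine le_csSup ⟨√‖Ts * T‖, ?_⟩ ⟨x, hx, rfl⟩
  rintro r ⟨y, hy, rfl⟩
  calc ‖innerA A (T y) y‖ ≤ normA A (T y) * normA A y := norm_innerA_le hA _ _
    _ ≤ √‖Ts * T‖ := by rw [hy, mul_one]; exact normA_apply_le_sqrt hA hT hy

theorem norm_mul_norm_innerA_mul_norm_innerA_le (hA : A.IsPositive) (hB : IsAAdjoint A B Bs)
    {x : H} (hx : normA A x = 1) (α : ℂ) :
    ‖α‖ * (‖innerA A (B x) x‖ * ‖innerA A (C x) x‖) ≤
      ‖innerA A ((B * C) x) x‖ + max 1 ‖1 - α‖ * (normA A (Bs x) * normA A (C x)) := by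
  obtain ⟨S, hAS⟩ := hA.exists_eq_star_mul_self
  rw [normA_eq_norm hAS] at hx
  rw [hB.innerA_apply_left hA.isSelfAdjoint, mul_apply_eq_comp,
    hB.innerA_apply_left hA.isSelfAdjoint, normA_eq_norm hAS, normA_eq_norm hAS]
  simp only [innerA_eq_inner hAS]
  exact norm_mul_norm_inner_mul_norm_inner_le hx α _ _

theorem normA_sq_add_normA_sq_le (hA : A.IsPositive) (hB : IsAAdjoint A B Bs)
    (hC : IsAAdjoint A C Cs) {x : H} (hx : normA A x = 1) :
    normA A (Bs x) ^ 2 + normA A (C x) ^ 2 ≤ normA A ((Cs * C + B * Bs) x) := by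
  have hA' := hA.isSelfAdjoint
  calc normA A (Bs x) ^ 2 + normA A (C x) ^ 2 = (innerA A ((Cs * C + B * Bs) x) x).re := by
        rw [← re_innerA_self hA, ← re_innerA_self hA, add_apply,
          mul_apply_eq_comp, mul_apply_eq_comp, innerA_add_left,
          (hC.symm hA').innerA_apply_left hA', hB.innerA_apply_left hA', Complex.add_re, add_comm]
    _ ≤ ‖innerA A ((Cs * C + B * Bs) x) x‖ := Complex.re_le_norm _
    _ ≤ normA A ((Cs * C + B * Bs) x) := by
        simpa [hx] using norm_innerA_le hA ((Cs * C + B * Bs) x) x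

theorem two_mul_norm_innerA_mul_norm_innerA_le (hA : A.IsPositive) (hB : IsAAdjoint A B Bs)
    (hC : IsAAdjoint A C Cs) {x : H} (hx : normA A x = 1) {α : ℂ} (hα : α ≠ 0) :
    2 * ‖innerA A (B x) x‖ * ‖innerA A (C x) x‖ ≤
      (max 1 ‖1 - α‖ * opNormA A (Cs * C + B * Bs) + 2 * wA A (B * C)) / ‖α‖ := by
  have hA' := hA.isSelfAdjoint
  have hD : IsAAdjoint A (Cs * C + B * Bs) (Cs * C + B * Bs) :=
    ((hC.symm hA').mul hC).add (hB.mul (hB.symm hA'))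
  have hbuzano := norm_mul_norm_innerA_mul_norm_innerA_le (C := C) hA hB hx α
  have hBC := norm_innerA_apply_le_wA hA (hB.mul hC) hx
  have hUV := two_mul_le_add_sq (normA A (Bs x)) (normA A (C x))
  have hsum := (normA_sq_add_normA_sq_le hA hB hC hx).trans (normA_apply_le_opNormA hA hD hx)
  have hm : (0 : ℝ) ≤ max 1 ‖1 - α‖ := zero_le_one.trans (le_max_left _ _)
  rw [le_div_iff₀ (norm_pos_iff.mpr hα)]
  nlinarith [mul_le_mul_of_nonneg_left (hUV.trans hsum) hm]

end Positive

theorem stmt11_general (A : H →L[ℂ] H) (hA : A.IsPositive)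
    (B C Bs Cs : H →L[ℂ] H)
    (hB : A.comp Bs = (ContinuousLinearMap.adjoint B).comp A)
    (hC : A.comp Cs = (ContinuousLinearMap.adjoint C).comp A)
    (α : ℂ) (hα : α ≠ 0) :
    (wAe A B C)^2
      ≤ min ((wA A (B - C))^2) ((wA A (B + C))^2)
          + (max 1 (‖1 - α‖) * opNormA A (Cs * C + B * Bs)
              + 2 * wA A (B * C)) / ‖α‖ := by
  have hB' : IsAAdjoint A B Bs := hB
  have hC' : IsAAdjoint A C Cs := hC
  refine wAe_sq_le (by
    have := opNormA_nonneg A (Cs * C + B * Bs)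
    have := wA_nonneg A (B * C)
    positivity) fun x hx => ?_
  have hsub : ‖innerA A (B x) x - innerA A (C x) x‖ ≤ wA A (B - C) := by
    simpa only [sub_apply, innerA_sub_left]
      using norm_innerA_apply_le_wA hA (hB'.sub hC') hx
  have hadd : ‖innerA A (B x) x + innerA A (C x) x‖ ≤ wA A (B + C) := by
    simpa only [add_apply, innerA_add_left]
      using norm_innerA_apply_le_wA hA (hB'.add hC') hx
  have hmin := sq_norm_sub_norm_le_min (innerA A (B x) x) (innerA A (C x) x)
  have hcross := two_mul_norm_innerA_mul_norm_innerA_le hA hB' hC' hx hα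
  calc ‖innerA A (B x) x‖ ^ 2 + ‖innerA A (C x) x‖ ^ 2
      = (‖innerA A (B x) x‖ - ‖innerA A (C x) x‖) ^ 2
        + 2 * ‖innerA A (B x) x‖ * ‖innerA A (C x) x‖ := by ring
    _ ≤ _ := add_le_add (hmin.trans (min_le_min (by gcongr) (by gcongr))) hcross

theorem stmt11 (A : H →L[ℂ] H) (hA : A.IsPositive) (hA0 : A ≠ 0)
    (B C Bs Cs : H →L[ℂ] H)
    (hB : A.comp Bs = (ContinuousLinearMap.adjoint B).comp A)
    (hC : A.comp Cs = (ContinuousLinearMap.adjoint C).comp A)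
    (α : ℂ) (hα : α ≠ 0) :
    (wAe A B C)^2
      ≤ min ((wA A (B - C))^2) ((wA A (B + C))^2)
          + (max 1 (‖1 - α‖) * opNormA A (Cs * C + B * Bs)
              + 2 * wA A (B * C)) / ‖α‖ :=
  stmt11_general A hA B C Bs Cs hB hC α hα
end
end

section
/- Let B and C be bounded linear operators on H admitting A-adjoints. Then max{ (w_A(B))² + (c_A(C))², (w_A(C))² + (c_A(B))² } ≤ (w_{A,e}(B,C))². -/
noncomputable section

open scoped ComplexInnerProductSpace

variable {H : Type*} [NormedAddCommGroup H] [InnerProductSpace ℂ H] [CompleteSpace H]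

/-!
For every `x` with `‖x‖_A = 1`,
`|⟨Bx,x⟩_A|² + c_A(C)² ≤ |⟨Bx,x⟩_A|² + |⟨Cx,x⟩_A|² ≤ w_{A,e}(B,C)²`, and taking the supremum
over `x` gives the bound for the first entry of the maximum; the second is symmetric.
What needs an argument is that the supremum defining `w_{A,e}(B,C)` is finite. Writing
`‖x‖_A = ‖A^{1/2} x‖`, the operator `S = T♯T` is symmetric for the `A`-semi-inner product and
`‖Tx‖_A² = ⟨Sx,x⟩_A`; the power trick bounds `‖Sx‖_A ≤ ‖S‖` on the `A`-unit ball, so every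
operator with an `A`-adjoint is `A`-bounded.
-/

theorem le_of_sq_le_succ_of_le_mul_pow_two_pow {b : ℕ → ℝ} {K s : ℝ} (hs : 0 ≤ s)
    (hsq : ∀ n, b n ^ 2 ≤ b (n + 1)) (hle : ∀ n, b n ≤ K * s ^ 2 ^ n) : b 0 ≤ s := by
  by_contra! hlt
  have hb0 : 0 < b 0 := hs.trans_lt hlt
  have hpow : ∀ n, b 0 ^ 2 ^ n ≤ b n := by
    intro n
    induction n with
    | zero => simp
    | succ n ih =>
      calc b 0 ^ 2 ^ (n + 1) = (b 0 ^ 2 ^ n) ^ 2 := by rw [pow_succ, pow_mul]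
        _ ≤ b n ^ 2 := by gcongr
        _ ≤ b (n + 1) := hsq n
  rcases hs.eq_or_lt with rfl | hs
  · have := (hpow 1).trans (hle 1)
    norm_num at this
    linarith [pow_pos hb0 2]
  · have hq : 1 < b 0 / s := (one_lt_div hs).2 hlt
    obtain ⟨n, hn⟩ := pow_unbounded_of_one_lt K hq
    have : (b 0 / s) ^ 2 ^ n ≤ K := by
      rw [div_pow, div_le_iff₀ (by positivity)]
      exact (hpow _).trans (hle _)
    have : (b 0 / s) ^ n ≤ (b 0 / s) ^ 2 ^ n := pow_le_pow_right₀ hq.le Nat.lt_two_pow_self.le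
    linarith

open scoped InnerProductSpace

section PowerTrick

variable {𝕜 E F : Type*} [RCLike 𝕜] [NormedAddCommGroup E] [NormedSpace 𝕜 E]
  [NormedAddCommGroup F] [InnerProductSpace 𝕜 F] {P : E →L[𝕜] F} {S : E →L[𝕜] E}

theorem inner_map_pow_apply_map (hS : ∀ x y, ⟪P (S x), P y⟫_𝕜 = ⟪P x, P (S y)⟫_𝕜) (k : ℕ)
    (x y : E) : ⟪P ((S ^ k) x), P y⟫_𝕜 = ⟪P x, P ((S ^ k) y)⟫_𝕜 := by
  induction k generalizing x with
  | zero => simp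
  | succ k ih =>
    calc ⟪P ((S ^ (k + 1)) x), P y⟫_𝕜 = ⟪P ((S ^ k) (S x)), P y⟫_𝕜 := by rw [pow_succ]; rfl
      _ = ⟪P x, P (S ((S ^ k) y))⟫_𝕜 := by rw [ih, hS]
      _ = ⟪P x, P ((S ^ (k + 1)) y)⟫_𝕜 := by rw [pow_succ']; rfl

theorem norm_map_pow_apply_sq_le (hS : ∀ x y, ⟪P (S x), P y⟫_𝕜 = ⟪P x, P (S y)⟫_𝕜) (k : ℕ)
    (x : E) : ‖P ((S ^ k) x)‖ ^ 2 ≤ ‖P x‖ * ‖P ((S ^ (2 * k)) x)‖ := by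
  have h : ⟪P ((S ^ k) x), P ((S ^ k) x)⟫_𝕜 = ⟪P x, P ((S ^ (2 * k)) x)⟫_𝕜 := by
    rw [inner_map_pow_apply_map hS, two_mul, pow_add, mul_apply_eq_comp]
  rw [← inner_self_eq_norm_sq (𝕜 := 𝕜), h]
  exact (RCLike.re_le_norm _).trans (norm_inner_le_norm _ _)

/-- Iterating Cauchy–Schwarz gives `‖P (S x)‖ ≤ ‖P ((S ^ 2 ^ n) x)‖ ^ (1 / 2 ^ n)`, and the
right-hand side is at most `(‖P‖ * ‖x‖) ^ (1 / 2 ^ n) * ‖S‖`. -/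
theorem norm_map_apply_le_opNorm (hS : ∀ x y, ⟪P (S x), P y⟫_𝕜 = ⟪P x, P (S y)⟫_𝕜) {x : E}
    (hx : ‖P x‖ ≤ 1) : ‖P (S x)‖ ≤ ‖S‖ := by
  refine le_of_sq_le_succ_of_le_mul_pow_two_pow (b := fun n ↦ ‖P ((S ^ 2 ^ n) x)‖)
    (K := ‖P‖ * ‖x‖) (norm_nonneg S) (fun n ↦ ?_) (fun n ↦ ?_)
  · calc ‖P ((S ^ 2 ^ n) x)‖ ^ 2 ≤ ‖P x‖ * ‖P ((S ^ (2 * 2 ^ n)) x)‖ :=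
          norm_map_pow_apply_sq_le hS _ x
      _ ≤ ‖P ((S ^ 2 ^ (n + 1)) x)‖ := by
          rw [← pow_succ']
          exact mul_le_of_le_one_left (norm_nonneg _) hx
  · calc ‖P ((S ^ 2 ^ n) x)‖ ≤ ‖P‖ * (‖S ^ 2 ^ n‖ * ‖x‖) :=
          P.le_opNorm_of_le ((S ^ 2 ^ n).le_opNorm x)
      _ ≤ ‖P‖ * (‖S‖ ^ 2 ^ n * ‖x‖) := by gcongr; exact norm_pow_le' S (by positivity)
      _ = ‖P‖ * ‖x‖ * ‖S‖ ^ 2 ^ n := by ring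

end PowerTrick

open ContinuousLinearMap

section SqrtA

variable {A : H →L[ℂ] H}

theorem inner_sqrt_apply_sqrt_apply (hA : A.IsPositive) (x y : H) :
    ⟪CFC.sqrt A x, CFC.sqrt A y⟫ = ⟪x, A y⟫ := by
  have hP : ∀ u v, ⟪CFC.sqrt A u, v⟫ = ⟪u, CFC.sqrt A v⟫ :=
    (IsSelfAdjoint.of_nonneg (CFC.sqrt_nonneg A)).isSymmetric
  rw [hP, ← mul_apply_eq_comp,
    CFC.sqrt_mul_sqrt_self A ((nonneg_iff_isPositive A).2 hA)]

theorem innerA_eq_inner_sqrt (hA : A.IsPositive) (x y : H) :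
    innerA A x y = ⟪CFC.sqrt A y, CFC.sqrt A x⟫ :=
  (inner_sqrt_apply_sqrt_apply hA y x).symm

theorem normA_eq_norm_sqrt (hA : A.IsPositive) (x : H) : normA A x = ‖CFC.sqrt A x‖ := by
  rw [normA, innerA_eq_inner_sqrt hA, norm_eq_sqrt_re_inner (𝕜 := ℂ)]
  rfl

variable {T Ts : H →L[ℂ] H}

theorem inner_adjointA_apply_A (hA : A.IsPositive) (hT : A.comp Ts = (adjoint T).comp A)
    (x y : H) : ⟪Ts (T x), A y⟫ = ⟪T x, A (T y)⟫ := by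
  have hAs : ∀ u v, ⟪A u, v⟫ = ⟪u, A v⟫ := hA.isSelfAdjoint.isSymmetric
  rw [← hAs, ← comp_apply, hT, comp_apply, adjoint_inner_left, hAs]

theorem normA_apply_le (hA : A.IsPositive) (hT : A.comp Ts = (adjoint T).comp A) {x : H}
    (hx : normA A x ≤ 1) : normA A (T x) ≤ √‖Ts * T‖ := by
  set P := CFC.sqrt A
  rw [normA_eq_norm_sqrt hA] at hx ⊢
  have hS : ∀ u v, ⟪P ((Ts * T) u), P v⟫ = ⟪P u, P ((Ts * T) v)⟫ := by
    intro u v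
    rw [← inner_conj_symm (P u), inner_sqrt_apply_sqrt_apply hA, inner_sqrt_apply_sqrt_apply hA,
      mul_apply_eq_comp, mul_apply_eq_comp, inner_adjointA_apply_A hA hT,
      inner_adjointA_apply_A hA hT, inner_conj_symm]
    exact (hA.isSelfAdjoint.isSymmetric _ _).symm
  have hsq : ‖P (T x)‖ ^ 2 ≤ ‖Ts * T‖ :=
    calc ‖P (T x)‖ ^ 2 = RCLike.re ⟪P ((Ts * T) x), P x⟫ := by
          rw [← inner_self_eq_norm_sq (𝕜 := ℂ), inner_sqrt_apply_sqrt_apply hA,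
            inner_sqrt_apply_sqrt_apply hA, mul_apply_eq_comp, inner_adjointA_apply_A hA hT]
      _ ≤ ‖P ((Ts * T) x)‖ * ‖P x‖ := (RCLike.re_le_norm _).trans (norm_inner_le_norm _ _)
      _ ≤ ‖Ts * T‖ :=
          mul_le_of_le_one_right (norm_nonneg _) hx |>.trans (norm_map_apply_le_opNorm hS hx)
  exact Real.le_sqrt_of_sq_le hsq

theorem norm_innerA_apply_le (hA : A.IsPositive) (hT : A.comp Ts = (adjoint T).comp A) {x : H}
    (hx : normA A x ≤ 1) : ‖innerA A (T x) x‖ ≤ √‖Ts * T‖ :=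
  calc ‖innerA A (T x) x‖ ≤ normA A x * normA A (T x) := by
        rw [innerA_eq_inner_sqrt hA, normA_eq_norm_sqrt hA, normA_eq_norm_sqrt hA]
        exact norm_inner_le_norm _ _
    _ ≤ √‖Ts * T‖ :=
      mul_le_of_le_one_left (Real.sqrt_nonneg _) hx |>.trans (normA_apply_le hA hT hx)

end SqrtA

theorem sSup_sq_add_sInf_sq_le {X : Type*} {p : X → Prop} {f g : X → ℝ} {W : ℝ}
    (hf : ∀ x, 0 ≤ f x) (hg : ∀ x, 0 ≤ g x) (hW0 : 0 ≤ W)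
    (hW : ∀ x, p x → f x ^ 2 + g x ^ 2 ≤ W) :
    sSup {r | ∃ x, p x ∧ r = f x} ^ 2 + sInf {r | ∃ x, p x ∧ r = g x} ^ 2 ≤ W := by
  rcases em (∃ x, p x) with ⟨x₀, hx₀⟩ | hempty
  · set c := sInf {r | ∃ x, p x ∧ r = g x}
    have hc0 : 0 ≤ c := Real.sInf_nonneg (by rintro _ ⟨x, -, rfl⟩; exact hg x)
    have hcg : ∀ x, p x → c ≤ g x := fun x hx ↦
      csInf_le ⟨0, by rintro _ ⟨y, -, rfl⟩; exact hg y⟩ ⟨x, hx, rfl⟩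
    have hfW : ∀ x, p x → f x ≤ √(W - c ^ 2) := fun x hx ↦
      Real.le_sqrt_of_sq_le (by nlinarith [hW x hx, hcg x hx])
    have hcW : c ^ 2 ≤ W := by nlinarith [hW x₀ hx₀, hcg x₀ hx₀, sq_nonneg (f x₀)]
    calc sSup {r | ∃ x, p x ∧ r = f x} ^ 2 + c ^ 2 ≤ √(W - c ^ 2) ^ 2 + c ^ 2 := by
          gcongr
          · exact Real.sSup_nonneg (by rintro _ ⟨x, -, rfl⟩; exact hf x)
          · exact Real.sSup_le (by rintro _ ⟨x, hx, rfl⟩; exact hfW x hx) (Real.sqrt_nonneg _)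
      _ = W := by rw [Real.sq_sqrt (by linarith)]; ring
  · simpa [not_exists.1 hempty] using hW0

/-- The `A`-adjoints make the set defining `wAe A B C` bounded above, so that its `sSup` is not
the junk value `0`. -/
theorem sq_add_sq_le_wAe_sq {A B C Bs Cs : H →L[ℂ] H} (hA : A.IsPositive)
    (hB : A.comp Bs = (adjoint B).comp A) (hC : A.comp Cs = (adjoint C).comp A) {x : H}
    (hx : normA A x = 1) :
    ‖innerA A (B x) x‖ ^ 2 + ‖innerA A (C x) x‖ ^ 2 ≤ wAe A B C ^ 2 := by
  have hbdd : BddAbove {r | ∃ x : H, normA A x = 1 ∧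
      r = √(‖innerA A (B x) x‖ ^ 2 + ‖innerA A (C x) x‖ ^ 2)} := by
    refine ⟨√(√‖Bs * B‖ ^ 2 + √‖Cs * C‖ ^ 2), ?_⟩
    rintro _ ⟨y, hy, rfl⟩
    gcongr
    · exact norm_innerA_apply_le hA hB hy.le
    · exact norm_innerA_apply_le hA hC hy.le
  exact (Real.sqrt_le_iff.1 (le_csSup hbdd ⟨x, hx, rfl⟩)).2

theorem stmt15_general (A : H →L[ℂ] H) (hA : A.IsPositive)
    (B C Bs Cs : H →L[ℂ] H)
    (hB : A.comp Bs = (ContinuousLinearMap.adjoint B).comp A)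
    (hC : A.comp Cs = (ContinuousLinearMap.adjoint C).comp A) :
    max ((wA A B)^2 + (cA A C)^2) ((wA A C)^2 + (cA A B)^2) ≤ (wAe A B C)^2 := by
  have hW := fun x (hx : normA A x = 1) ↦ sq_add_sq_le_wAe_sq hA hB hC hx
  refine max_le ?_ ?_
  · exact sSup_sq_add_sInf_sq_le (fun _ ↦ norm_nonneg _) (fun _ ↦ norm_nonneg _) (sq_nonneg _) hW
  · exact sSup_sq_add_sInf_sq_le (fun _ ↦ norm_nonneg _) (fun _ ↦ norm_nonneg _) (sq_nonneg _)
      fun x hx ↦ (add_comm _ _).le.trans (hW x hx)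

theorem stmt15 (A : H →L[ℂ] H) (hA : A.IsPositive) (hA0 : A ≠ 0)
    (B C Bs Cs : H →L[ℂ] H)
    (hB : A.comp Bs = (ContinuousLinearMap.adjoint B).comp A)
    (hC : A.comp Cs = (ContinuousLinearMap.adjoint C).comp A) :
    max ((wA A B)^2 + (cA A C)^2) ((wA A C)^2 + (cA A B)^2) ≤ (wAe A B C)^2 :=
  stmt15_general A hA B C Bs Cs hB hC
end
end
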